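/- Tube overlap bound from the fundamental theorem of algebra: let $P$ be a nonzero polynomial of degree $\le D$ on $\mathbb{R}^3$ and let $O_1',\dots,O_N'$ be the connected components of $\mathbb{R}^3\setminus Z(P)$ minus the $R^{1/2+\delta}$-neighborhood $W$ of $Z(P)$. For each tube $T_{\theta,\nu}$ (a line segment thickened to radius $R^{1/2+\delta}$ with direction $G(\theta)=(-2c(\theta),1)$), the number of indices $i$ such that $T_{\theta,\nu}\cap O_i' \neq \emptyset$ is at most $D+1$. -/

import Mathlib

/-!
Every cell `O i` met by the tube contains a point of its core line: a point `w` of the tube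
lies within `R^{1/2+δ}` of the point of the core line at the same height, and the closed ball
of that radius around `w ∉ W` misses `Z(P)`. Along the core line `P` restricts to a
polynomial `q` of degree at most `D`, and two distinct cells visited by the line are separated
by a zero of `q`, so ordering the visits shows that there are at most `D + 1` of them.
-/

open MeasureTheory Real Set Filter Metric
open scoped RealInnerProductSpace ENNReal

noncomputable section

abbrev E3 := EuclideanSpace ℝ (Fin 3)

/-- Evaluation of a polynomial in three variables at a point of `ℝ³`. -/
def evalP3 (P : MvPolynomial (Fin 3) ℝ) (w : E3) : ℝ :=
  MvPolynomial.eval (fun i => w i) P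

open Polynomial

namespace MvPolynomial

variable {σ R : Type*} [CommSemiring R]

theorem polynomial_eval_aeval (g : σ → R[X]) (P : MvPolynomial σ R) (t : R) :
    (aeval g P).eval t = eval (fun i => (g i).eval t) P := by
  rw [← coe_evalRingHom, map_aeval]
  have hid : (evalRingHom t).comp (algebraMap R R[X]) = RingHom.id R := by ext; simp
  rw [hid]
  rfl

theorem natDegree_aeval_le_totalDegree (g : σ → R[X]) (hg : ∀ i, (g i).natDegree ≤ 1)
    (P : MvPolynomial σ R) : (aeval g P).natDegree ≤ P.totalDegree := by
  rw [aeval_def, eval₂_eq]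
  refine natDegree_sum_le_of_forall_le _ _ fun d hd => ?_
  calc (algebraMap R R[X] (coeff d P) * ∏ i ∈ d.support, g i ^ d i).natDegree
      ≤ ∑ i ∈ d.support, (g i ^ d i).natDegree :=
        (natDegree_C_mul_le _ _).trans (natDegree_prod_le _ _)
    _ ≤ ∑ i ∈ d.support, d i := Finset.sum_le_sum fun i _ =>
        natDegree_pow_le_of_le _ (hg i) |>.trans_eq (mul_one _)
    _ ≤ P.totalDegree := le_totalDegree hd

end MvPolynomial

theorem Finset.card_le_card_add_one_of_forall_exists_mem_Ioo {α : Type*} [LinearOrder α]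
    {T Z : Finset α} (h : ∀ t ∈ T, ∀ t' ∈ T, t < t' → ∃ z ∈ Z, z ∈ Set.Ioo t t') :
    T.card ≤ Z.card + 1 := by
  have hmono : StrictMonoOn (fun t => (Z.filter (· < t)).card) T := by
    intro t ht t' ht' hlt
    obtain ⟨z, hz, hzt, hzt'⟩ := h t ht t' ht' hlt
    refine card_lt_card ⟨fun u hu => ?_, fun hsub => ?_⟩
    · simp only [mem_filter] at hu ⊢
      exact ⟨hu.1, hu.2.trans hlt⟩
    · exact (mem_filter.1 (hsub (mem_filter.2 ⟨hz, hzt'⟩))).2.not_gt hzt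
  calc T.card ≤ (range (Z.card + 1)).card :=
        card_le_card_of_injOn _ (fun t _ => mem_range.2 (Nat.lt_succ_of_le (card_filter_le _ _)))
          hmono.injOn
    _ = Z.card + 1 := card_range _

theorem Polynomial.card_le_natDegree_add_one_of_forall_exists_isRoot {R : Type*} [CommRing R]
    [IsDomain R] [LinearOrder R] (q : R[X]) {T : Finset R} (hT : ∀ t ∈ T, ¬q.IsRoot t)
    (h : ∀ t ∈ T, ∀ t' ∈ T, t < t' → ∃ u ∈ Ioo t t', q.IsRoot u) : T.card ≤ q.natDegree + 1 := by
  rcases T.eq_empty_or_nonempty with rfl | ⟨t, ht⟩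
  · simp
  have hq : q ≠ 0 := fun h0 => hT t ht (by simp [h0])
  refine (Finset.card_le_card_add_one_of_forall_exists_mem_Ioo (Z := q.roots.toFinset)
    fun t ht t' ht' hlt => ?_).trans (Nat.add_le_add_right ?_ 1)
  · obtain ⟨u, hu, hroot⟩ := h t ht t' ht' hlt
    exact ⟨u, Multiset.mem_toFinset.2 ((mem_roots hq).2 hroot), hu⟩
  · exact (Multiset.toFinset_card_le _).trans (card_roots' q)

theorem mem_connectedComponentIn_of_dist_le {E : Type*} [SeminormedAddCommGroup E]
    [NormedSpace ℝ E] {S : Set E} {x y : E} {r : ℝ} (hx : x ∉ cthickening r Sᶜ)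
    (hy : dist x y ≤ r) : y ∈ connectedComponentIn S x := by
  have hball : closedBall x r ⊆ S := fun p hp => by_contra fun hpS =>
    hx (mem_cthickening_of_dist_le x p r Sᶜ hpS (mem_closedBall'.1 hp))
  exact (convex_closedBall x r).isPreconnected.subset_connectedComponentIn
    (mem_closedBall_self (dist_nonneg.trans hy)) hball (mem_closedBall'.2 hy)

section Components

variable {X ι : Type*} [TopologicalSpace X] {S : Set X} {O : ι → Set X}

theorem eq_connectedComponentIn_of_mem {C : Set X} {x : X}
    (hC : ∃ z, C = connectedComponentIn S z) (hx : x ∈ C) : C = connectedComponentIn S x := by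
  obtain ⟨z, rfl⟩ := hC
  exact connectedComponentIn_eq hx

theorem eq_of_mem_of_mem_connectedComponentIn (hOinj : Function.Injective O)
    (hO : ∀ i, ∃ z, O i = connectedComponentIn S z) {i j : ι} {x : X} (hi : x ∈ O i)
    (hj : x ∈ O j) : i = j :=
  hOinj <| (eq_connectedComponentIn_of_mem (hO i) hi).trans
    (eq_connectedComponentIn_of_mem (hO j) hj).symm

theorem card_le_natDegree_add_one_of_forall_meets_curve (hOinj : Function.Injective O)
    (hO : ∀ i, ∃ z, O i = connectedComponentIn S z) {γ : ℝ → X} (hγ : Continuous γ)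
    {q : ℝ[X]} (hq : ∀ t, q.IsRoot t ↔ γ t ∉ S) (s : Finset ι) (hs : ∀ i ∈ s, ∃ t, γ t ∈ O i) :
    s.card ≤ q.natDegree + 1 := by
  classical
  choose! τ hτ using hs
  have hOS : ∀ i, O i ⊆ S := fun i => by
    obtain ⟨z, hz⟩ := hO i
    exact hz ▸ connectedComponentIn_subset S z
  have hinj : Set.InjOn τ s := fun i hi j hj hij =>
    eq_of_mem_of_mem_connectedComponentIn hOinj hO (hτ i hi) (hij ▸ hτ j hj)
  rw [← Finset.card_image_of_injOn hinj]
  refine q.card_le_natDegree_add_one_of_forall_exists_isRoot ?_ ?_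
  · simp only [Finset.mem_image, forall_exists_index, and_imp, forall_apply_eq_imp_iff₂, hq,
      not_not]
    exact fun i hi => hOS i (hτ i hi)
  simp only [Finset.mem_image, forall_exists_index, and_imp, forall_apply_eq_imp_iff₂]
  intro i hi j hj hlt
  by_contra! hnoroot
  have hIcc : γ '' Icc (τ i) (τ j) ⊆ S := by
    rintro _ ⟨u, ⟨hiu, huj⟩, rfl⟩
    rcases hiu.eq_or_lt with rfl | hiu
    · exact hOS i (hτ i hi)
    rcases huj.eq_or_lt with rfl | huj
    · exact hOS j (hτ j hj)
    exact not_not.1 ((hq u).not.1 (hnoroot u ⟨hiu, huj⟩))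
  have hji : γ (τ j) ∈ O i := by
    rw [eq_connectedComponentIn_of_mem (hO i) (hτ i hi)]
    exact (isPreconnected_Icc.image γ hγ.continuousOn).subset_connectedComponentIn
      (mem_image_of_mem γ (left_mem_Icc.2 hlt.le)) hIcc
      (mem_image_of_mem γ (right_mem_Icc.2 hlt.le))
  exact hlt.ne (congrArg τ (eq_of_mem_of_mem_connectedComponentIn hOinj hO hji (hτ j hj)))

end Components

theorem exists_natDegree_le_eval_eq_evalP3_add_smul (P : MvPolynomial (Fin 3) ℝ) (a v : E3) :
    ∃ q : ℝ[X], q.natDegree ≤ P.totalDegree ∧ ∀ t : ℝ, q.eval t = evalP3 P (a + t • v) := by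
  refine ⟨MvPolynomial.aeval (fun i => C (v i) * X + C (a i)) P,
    MvPolynomial.natDegree_aeval_le_totalDegree _ (fun _ => natDegree_linear_le) P, fun t => ?_⟩
  rw [MvPolynomial.polynomial_eval_aeval, evalP3]
  simp only [eval_add, eval_mul, eval_C, eval_X, PiLp.add_apply, PiLp.smul_apply, smul_eq_mul,
    mul_comm, add_comm]

def coreLine (cθ cν : EuclideanSpace ℝ (Fin 2)) (t : ℝ) : E3 :=
  !₂[cν 0, cν 1, 0] + t • !₂[-2 * cθ 0, -2 * cθ 1, 1]

theorem continuous_coreLine (cθ cν : EuclideanSpace ℝ (Fin 2)) : Continuous (coreLine cθ cν) := by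
  unfold coreLine
  fun_prop

theorem dist_coreLine (cθ cν : EuclideanSpace ℝ (Fin 2)) (w : E3) :
    dist w (coreLine cθ cν (w 2)) = Real.sqrt ((w 0 - (cν 0 - 2 * w 2 * cθ 0)) ^ 2
      + (w 1 - (cν 1 - 2 * w 2 * cθ 1)) ^ 2) := by
  rw [EuclideanSpace.dist_eq, Fin.sum_univ_three]
  congr 1
  simp [coreLine, Real.dist_eq]
  ring

theorem tube_meets_few_cells_general (R δ : ℝ)
    (D : ℕ) (P : MvPolynomial (Fin 3) ℝ) (hdeg : P.totalDegree ≤ D)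
    (cθ cν : EuclideanSpace ℝ (Fin 2))
    {ι : Type} (O : ι → Set E3) (hOinj : Function.Injective O)
    (hOcomp : ∀ i, ∃ z : E3, evalP3 P z ≠ 0 ∧
      O i = connectedComponentIn {w : E3 | evalP3 P w ≠ 0} z) :
    ∀ s : Finset ι,
      (∀ i ∈ s,
        ({w : E3 | 0 ≤ w 2 ∧ w 2 ≤ R ∧
            Real.sqrt ((w 0 - (cν 0 - 2 * w 2 * cθ 0)) ^ 2
              + (w 1 - (cν 1 - 2 * w 2 * cθ 1)) ^ 2) ≤ R ^ ((1 : ℝ) / 2 + δ)}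
          ∩ (O i \ Metric.cthickening (R ^ ((1 : ℝ) / 2 + δ))
              {w : E3 | evalP3 P w = 0})).Nonempty) →
      s.card ≤ D + 1 := by
  intro s hs
  have hO : ∀ i, ∃ z, O i = connectedComponentIn {w : E3 | evalP3 P w ≠ 0} z :=
    fun i => (hOcomp i).imp fun _ h => h.2
  have hmeet : ∀ i ∈ s, ∃ t, coreLine cθ cν t ∈ O i := by
    intro i hi
    obtain ⟨w, ⟨-, -, hw⟩, hwO, hwZ⟩ := hs i hi
    refine ⟨w 2, ?_⟩
    rw [eq_connectedComponentIn_of_mem (hO i) hwO]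
    exact mem_connectedComponentIn_of_dist_le
      (by simpa only [compl_ofPred, ne_eq, not_not] using hwZ) ((dist_coreLine cθ cν w).trans_le hw)
  obtain ⟨q, hqdeg, hq⟩ := exists_natDegree_le_eval_eq_evalP3_add_smul P
    !₂[cν 0, cν 1, 0] !₂[-2 * cθ 0, -2 * cθ 1, 1]
  calc s.card ≤ q.natDegree + 1 :=
        card_le_natDegree_add_one_of_forall_meets_curve hOinj hO (continuous_coreLine cθ cν)
          (fun t => by simp [IsRoot, coreLine, hq]) s hmeet
    _ ≤ D + 1 := by omega

/-- tube overlap bound from the fundamental theorem of algebra. Let `P` be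
a nonzero polynomial of degree `≤ D` on `ℝ³`, `O i` the connected components of
`ℝ³ \ Z(P)`, `W` the `R^{1/2+δ}`-neighborhood of `Z(P)` and `T = T_{θ,ν}` the tube of
radius `R^{1/2+δ}` around the core line `x = c(ν) - 2t c(θ)`, `0 ≤ t ≤ R`. Then the number
of indices `i` with `T ∩ (O i \ W) ≠ ∅` is at most `D + 1`. -/
theorem tube_meets_few_cells (R δ : ℝ) (hR : 1 ≤ R) (hδ : 0 < δ)
    (D : ℕ) (P : MvPolynomial (Fin 3) ℝ) (hP : P ≠ 0) (hdeg : P.totalDegree ≤ D)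
    (cθ cν : EuclideanSpace ℝ (Fin 2))
    {ι : Type} (O : ι → Set E3) (hOinj : Function.Injective O)
    (hOcomp : ∀ i, ∃ z : E3, evalP3 P z ≠ 0 ∧
      O i = connectedComponentIn {w : E3 | evalP3 P w ≠ 0} z) :
    ∀ s : Finset ι,
      (∀ i ∈ s,
        ({w : E3 | 0 ≤ w 2 ∧ w 2 ≤ R ∧
            Real.sqrt ((w 0 - (cν 0 - 2 * w 2 * cθ 0)) ^ 2
              + (w 1 - (cν 1 - 2 * w 2 * cθ 1)) ^ 2) ≤ R ^ ((1 : ℝ) / 2 + δ)}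
          ∩ (O i \ Metric.cthickening (R ^ ((1 : ℝ) / 2 + δ))
              {w : E3 | evalP3 P w = 0})).Nonempty) →
      s.card ≤ D + 1 :=
  tube_meets_few_cells_general R δ D P hdeg cθ cν O hOinj hOcomp
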